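/- arXiv:1404.7479 — 2 statements merged into one kernel-verified Lean document; each statement's English description precedes it below -/
import Mathlib

section
/- Suppose a sequence of reals (ν_t) satisfies ν_{t+1} ≥ ν_t + (1/2)ν_t(1−ν_t²) − 12α/√(1−ν_t²) whenever 0 < ν_t ≤ 1/2, where α > 0. Then there is an absolute constant K (e.g. K = 120) such that if Kα ≤ ν_t ≤ 1/2, then ν_{t+1} ≥ (5/4)ν_t. Consequently, starting from ν_0 ≥ Kα, the imbalance reaches 1/2 within at most ⌈log_{5/4}(1/(2ν_0))⌉ steps (as long as the recurrence remains valid). -/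
/-- If `ν_{t+1} ≥ ν_t + (1/2)ν_t(1−ν_t²) − 12α/√(1−ν_t²)` whenever `0 < ν_t ≤ 1/2`,
then with `K = 120`: whenever `Kα ≤ ν_t ≤ 1/2` one has `ν_{t+1} ≥ (5/4)ν_t`; and starting
from `ν_0 ≥ Kα` the imbalance reaches `1/2` within `⌈log_{5/4}(1/(2ν_0))⌉` steps. -/
theorem stmt_10 (α : ℝ) (hα : 0 < α) (ν : ℕ → ℝ)
    (hrec : ∀ t, 0 < ν t → ν t ≤ 1 / 2 →
      ν t + (1 / 2) * ν t * (1 - (ν t) ^ 2) - 12 * α / Real.sqrt (1 - (ν t) ^ 2) ≤ ν (t + 1)) :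
    (∀ t, 120 * α ≤ ν t → ν t ≤ 1 / 2 → (5 / 4) * ν t ≤ ν (t + 1)) ∧
      (120 * α ≤ ν 0 →
        ∃ t ≤ ⌈Real.logb (5 / 4) (1 / (2 * ν 0))⌉₊, 1 / 2 ≤ ν t) := by
  have key : ∀ t, 120 * α ≤ ν t → ν t ≤ 1 / 2 → (5 / 4) * ν t ≤ ν (t + 1) := by
    intro t h1 h2
    have hpos : 0 < ν t := lt_of_lt_of_le (by positivity) h1
    have hrec' := hrec t hpos h2
    have hν2 : ν t ^ 2 ≤ 1 / 4 := by nlinarith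
    set s := Real.sqrt (1 - ν t ^ 2) with hs
    have hs0 : 0 ≤ s := Real.sqrt_nonneg _
    have hs2 : s ^ 2 = 1 - ν t ^ 2 := Real.sq_sqrt (by nlinarith)
    have hs45 : (4 / 5 : ℝ) ≤ s := by nlinarith
    have hspos : (0:ℝ) < s := by linarith
    have hdiv : 12 * α / s ≤ 15 * α := by
      rw [div_le_iff₀ hspos]; nlinarith
    nlinarith
  refine ⟨key, fun h0 => ?_⟩
  set N := ⌈Real.logb (5 / 4) (1 / (2 * ν 0))⌉₊ with hN
  by_contra hcon
  push_neg at hcon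
  have hpos0 : 0 < ν 0 := lt_of_lt_of_le (by positivity) h0
  have grow : ∀ t, t ≤ N → 120 * α ≤ ν t ∧ (5 / 4 : ℝ) ^ t * ν 0 ≤ ν t := by
    intro t
    induction t with
    | zero => intro _; exact ⟨h0, by simp⟩
    | succ t ih =>
      intro ht
      have ht' : t ≤ N := Nat.le_of_succ_le ht
      obtain ⟨ha, hb⟩ := ih ht'
      have hlt : ν t < 1 / 2 := hcon t ht'
      have hk := key t ha hlt.le
      refine ⟨by nlinarith, ?_⟩
      calc (5 / 4 : ℝ) ^ (t + 1) * ν 0 = (5 / 4) * ((5 / 4 : ℝ) ^ t * ν 0) := by ring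
        _ ≤ (5 / 4) * ν t := by nlinarith
        _ ≤ ν (t + 1) := hk
  have hNg := (grow N le_rfl).2
  have hNlt := hcon N le_rfl
  have h1 : (1 : ℝ) / (2 * ν 0) ≤ (5 / 4 : ℝ) ^ N := by
    have hlog : Real.logb (5 / 4) (1 / (2 * ν 0)) ≤ (N : ℝ) := Nat.le_ceil _
    have hx : 0 < (1 : ℝ) / (2 * ν 0) := by positivity
    calc (1 : ℝ) / (2 * ν 0)
        = (5 / 4 : ℝ) ^ Real.logb (5 / 4) (1 / (2 * ν 0)) :=
          (Real.rpow_logb (by norm_num) (by norm_num) hx).symm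
      _ ≤ (5 / 4 : ℝ) ^ (N : ℝ) :=
          (Real.rpow_le_rpow_left_iff (by norm_num)).mpr hlog
      _ = (5 / 4 : ℝ) ^ N := by rw [Real.rpow_natCast]
  rw [div_le_iff₀ (by positivity)] at h1
  nlinarith
end

section
/- Suppose a sequence of reals (δ_t) satisfies δ_{t+1} ≤ δ_t − (1/2)(1−δ_t)δ_t(2−δ_t) + 12α/√(δ_t(2−δ_t)) whenever 2c ≤ δ_t ≤ 1/2, where 0 < c ≤ 1/2 and 0 < α ≤ c^{3/2}/36. Then δ_{t+1} ≤ (3/4)δ_t whenever 2c ≤ δ_t ≤ 1/2. Consequently δ decreases from 1/2 to at most 2c within ⌈log_{4/3}(1/(4c))⌉ steps. -/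
/-- If `δ_{t+1} ≤ δ_t − (1/2)(1−δ_t)δ_t(2−δ_t) + 12α/√(δ_t(2−δ_t))` whenever `2c ≤ δ_t ≤ 1/2`,
with `0 < c ≤ 1/2` and `0 < α ≤ c^{3/2}/36`, then `δ_{t+1} ≤ (3/4)δ_t` whenever
`2c ≤ δ_t ≤ 1/2`; consequently `δ` decreases from `1/2` to at most `2c` within
`⌈log_{4/3}(1/(4c))⌉` steps. -/
theorem stmt_11 (c α : ℝ) (hc0 : 0 < c) (hc : c ≤ 1 / 2) (hα0 : 0 < α)
    (hα : α ≤ c ^ ((3 : ℝ) / 2) / 36) (δ : ℕ → ℝ)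
    (hrec : ∀ t, 2 * c ≤ δ t → δ t ≤ 1 / 2 →
      δ (t + 1) ≤ δ t - (1 / 2) * (1 - δ t) * δ t * (2 - δ t)
        + 12 * α / Real.sqrt (δ t * (2 - δ t))) :
    (∀ t, 2 * c ≤ δ t → δ t ≤ 1 / 2 → δ (t + 1) ≤ (3 / 4) * δ t) ∧
      (δ 0 ≤ 1 / 2 → ∃ t ≤ ⌈Real.logb (4 / 3) (1 / (4 * c))⌉₊, δ t ≤ 2 * c) := by
  have hrw : c ^ ((3 : ℝ) / 2) = c * Real.sqrt c := by
    rw [Real.sqrt_eq_rpow, show (3 : ℝ) / 2 = 1 + 1 / 2 by norm_num,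
      Real.rpow_add hc0, Real.rpow_one]
  have hsc0 : 0 < Real.sqrt c := Real.sqrt_pos.mpr hc0
  have hsc2 : Real.sqrt c ^ 2 = c := Real.sq_sqrt hc0.le
  have hα' : α ≤ c * Real.sqrt c / 36 := by rwa [hrw] at hα
  have main : ∀ t, 2 * c ≤ δ t → δ t ≤ 1 / 2 → δ (t + 1) ≤ (3 / 4) * δ t := by
    intro t h1 h2
    set d := δ t with hd
    have hd0 : 0 < d := lt_of_lt_of_le (by linarith) h1
    have hprod : 3 * c ≤ d * (2 - d) := by nlinarith
    have hs0 : 0 < Real.sqrt (d * (2 - d)) := Real.sqrt_pos.mpr (by nlinarith)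
    set s := Real.sqrt (d * (2 - d)) with hs
    have hs2 : s ^ 2 = d * (2 - d) := Real.sq_sqrt (by nlinarith)
    have hslb : 1.7 * Real.sqrt c ≤ s := by
      have : (1.7 * Real.sqrt c) ^ 2 ≤ s ^ 2 := by
        rw [hs2]; nlinarith
      nlinarith
    have hdiv : 12 * α / s ≤ d / 8 := by
      rw [div_le_div_iff₀ hs0 (by norm_num)]
      have : d * s ≥ 2 * c * (1.7 * Real.sqrt c) := by
        apply mul_le_mul h1 hslb (by positivity) hd0.le
      nlinarith
    have hmain : (1 / 2) * (1 - d) * d * (2 - d) ≥ (3 / 8) * d := by nlinarith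
    have := hrec t h1 h2
    linarith
  refine ⟨main, fun h0 => ?_⟩
  by_contra hcon
  push_neg at hcon
  set N := ⌈Real.logb (4 / 3) (1 / (4 * c))⌉₊ with hN
  have key : ∀ t ≤ N, δ t ≤ (3 / 4) ^ t * (1 / 2) := by
    intro t
    induction t with
    | zero => intro _; simpa using h0
    | succ n ih =>
      intro hn
      have hn' : n ≤ N := Nat.le_of_succ_le hn
      have h1 : (3 / 4 : ℝ) ^ n * (1 / 2) ≤ 1 / 2 := by
        have : (3 / 4 : ℝ) ^ n ≤ 1 := pow_le_one₀ (by norm_num) (by norm_num)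
        nlinarith
      have h2 := ih hn'
      have h3 : 2 * c ≤ δ n := (hcon n hn').le
      have := main n h3 (le_trans h2 h1)
      calc δ (n + 1) ≤ (3 / 4) * δ n := this
        _ ≤ (3 / 4) * ((3 / 4) ^ n * (1 / 2)) := by linarith
        _ = (3 / 4) ^ (n + 1) * (1 / 2) := by ring
  have hNN := hcon N le_rfl
  have hkey := key N le_rfl
  have hpow : (4 / 3 : ℝ) ^ (N : ℝ) < 1 / (4 * c) := by
    rw [Real.rpow_natCast]
    have h34 : (3 / 4 : ℝ) ^ N * (4 / 3 : ℝ) ^ N = 1 := by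
      rw [← mul_pow]; norm_num
    have hp0 : (0 : ℝ) < (4 / 3 : ℝ) ^ N := by positivity
    rw [lt_div_iff₀ (by linarith), mul_comm]
    nlinarith
  have hlt : (N : ℝ) < Real.logb (4 / 3) (1 / (4 * c)) := by
    rw [Real.lt_logb_iff_rpow_lt (by norm_num) (by positivity)]
    exact hpow
  have := Nat.le_ceil (Real.logb (4 / 3) (1 / (4 * c)))
  rw [← hN] at this
  linarith
end
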